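/- arXiv:1905.02694 — 4 statements merged into one kernel-verified Lean document; each statement's English description precedes it below -/
import Mathlib

section
/- For a unit a in a commutative ring R, the symplectic matrix K_{ii}(a), which is diagonal with a in position i, a^{-1} in position n+i, and 1 elsewhere, factors as K_{ii}(a) = E_{ii}(a-1) F_{ii}(1) E_{ii}(a^{-1}-1) F_{ii}(-a). -/
open Matrix

/-- Index type for `2n × 2n` block matrices. -/
abbrev Idx (n : ℕ) := Fin n ⊕ Fin n

/-- The standard symplectic form matrix `J = [[0, I], [-I, 0]]`. -/
def Jmat (R : Type*) [CommRing R] (n : ℕ) : Matrix (Idx n) (Idx n) R :=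
  Matrix.fromBlocks 0 1 (-1) 0

/-- A `2n × 2n` matrix is symplectic if `Mᵀ J M = J`. -/
def IsSymplectic {R : Type*} [CommRing R] {n : ℕ} (M : Matrix (Idx n) (Idx n) R) : Prop :=
  Mᵀ * Jmat R n * M = Jmat R n

/-- The symmetric `n × n` matrix with `a` in entries `(i,j)` and `(j,i)` and zeros elsewhere. -/
def Smat {R : Type*} [CommRing R] {n : ℕ} (i j : Fin n) (a : R) : Matrix (Fin n) (Fin n) R :=
  Matrix.of fun k l => if (k = i ∧ l = j) ∨ (k = j ∧ l = i) then a else 0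

/-- The elementary symplectic matrix `E_{ij}(a) = [[I, S],[0, I]]`. -/
def Emat {R : Type*} [CommRing R] {n : ℕ} (i j : Fin n) (a : R) : Matrix (Idx n) (Idx n) R :=
  Matrix.fromBlocks 1 (Smat i j a) 0 1

/-- The elementary symplectic matrix `F_{ij}(a) = [[I, 0],[S, I]]`. -/
def Fmat {R : Type*} [CommRing R] {n : ℕ} (i j : Fin n) (a : R) : Matrix (Idx n) (Idx n) R :=
  Matrix.fromBlocks 1 0 (Smat i j a) 1

/-- The matrix `K_{ij}(a) = [[I + a e_{ij}, 0],[0, I - a e_{ji}]]` for `i ≠ j`. -/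
def Kmat {R : Type*} [CommRing R] {n : ℕ} (i j : Fin n) (a : R) :
    Matrix (Idx n) (Idx n) R :=
  Matrix.fromBlocks (1 + Matrix.single i j a) 0 0 (1 - Matrix.single j i a)

/-- An elementary symplectic matrix: `[[I,B],[0,I]]` or `[[I,0],[C,I]]` with symmetric block. -/
def IsElemSymp {R : Type*} [CommRing R] {n : ℕ} (M : Matrix (Idx n) (Idx n) R) : Prop :=
  ∃ B : Matrix (Fin n) (Fin n) R, Bᵀ = B ∧
    (M = Matrix.fromBlocks 1 B 0 1 ∨ M = Matrix.fromBlocks 1 0 B 1)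

/-! All matrices in the identity are `2n × 2n` matrices whose four `n × n` blocks are diagonal.
Such matrices multiply like `2 × 2` matrices over `R`, one coordinate `k` at a time. The factors
are the identity at every coordinate `k ≠ i`, and at `k = i` the claim is the `2 × 2` identity
`diag(a, b) = [[1, a-1], [0, 1]] [[1, 0], [1, 1]] [[1, b-1], [0, 1]] [[1, 0], [-a, 1]]`
for `a b = 1`. -/

namespace Matrix

variable {m R : Type*} [DecidableEq m]

def fromDiagonalBlocks [Zero R] (M : m → Matrix (Fin 2) (Fin 2) R) :
    Matrix (m ⊕ m) (m ⊕ m) R :=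
  fromBlocks (diagonal fun k => M k 0 0) (diagonal fun k => M k 0 1)
    (diagonal fun k => M k 1 0) (diagonal fun k => M k 1 1)

theorem fromDiagonalBlocks_mul [Fintype m] [NonUnitalNonAssocSemiring R]
    (M N : m → Matrix (Fin 2) (Fin 2) R) :
    fromDiagonalBlocks M * fromDiagonalBlocks N = fromDiagonalBlocks (M * N) := by
  simp only [fromDiagonalBlocks, fromBlocks_multiply, diagonal_mul_diagonal, diagonal_add,
    Pi.mul_apply, mul_apply, Fin.sum_univ_two]

theorem diagonal_sum_elim_ite_eq_fromDiagonalBlocks [Zero R] [One R] (i : m) (a b : R) :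
    diagonal (Sum.elim (fun k => if k = i then a else 1) (fun k => if k = i then b else 1)) =
      fromDiagonalBlocks (Pi.mulSingle i !![a, 0; 0, b]) := by
  ext (k | k) (l | l) <;> obtain rfl | hk := eq_or_ne k i <;>
    simp [fromDiagonalBlocks, diagonal_apply, *]

end Matrix

open Matrix

section

variable {R : Type*} [CommRing R] {n : ℕ}

theorem fin_two_diagonal_eq_unitriangular_mul {a b : R} (h : a * b = 1) :
    !![a, 0; 0, b] =
      !![1, a - 1; 0, 1] * !![1, 0; 1, 1] * !![1, b - 1; 0, 1] * !![1, 0; -a, 1] := by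
  simp only [mul_fin_two]
  ext j k
  fin_cases j <;> fin_cases k <;>
    simp only [Fin.zero_eta, Fin.mk_one, of_apply, cons_val_zero, cons_val_one,
      cons_val_fin_one] <;>
    grind

theorem Emat_self_eq_fromDiagonalBlocks (i : Fin n) (b : R) :
    Emat i i b = fromDiagonalBlocks (Pi.mulSingle i !![1, b; 0, 1]) := by
  ext (k | k) (l | l) <;> obtain rfl | hk := eq_or_ne k i <;>
    simp [Emat, fromDiagonalBlocks, Smat, one_apply, diagonal_apply, @eq_comm _ l, *]

theorem Fmat_self_eq_fromDiagonalBlocks (i : Fin n) (c : R) :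
    Fmat i i c = fromDiagonalBlocks (Pi.mulSingle i !![1, 0; c, 1]) := by
  ext (k | k) (l | l) <;> obtain rfl | hk := eq_or_ne k i <;>
    simp [Fmat, fromDiagonalBlocks, Smat, one_apply, diagonal_apply, @eq_comm _ l, *]

end

/-- For a unit `a`, the diagonal symplectic matrix `K_{ii}(a)` factors as
`E_{ii}(a-1) F_{ii}(1) E_{ii}(a⁻¹-1) F_{ii}(-a)`. -/
theorem stmt3 {R : Type*} [CommRing R] {n : ℕ} (i : Fin n) (a : Rˣ) :
    Matrix.diagonal (Sum.elim (fun k => if k = i then (a : R) else 1)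
        (fun k => if k = i then ((a⁻¹ : Rˣ) : R) else 1)) =
      Emat i i ((a : R) - 1) * Fmat i i 1 * Emat i i (((a⁻¹ : Rˣ) : R) - 1) *
        Fmat i i (-(a : R)) := by
  rw [diagonal_sum_elim_ite_eq_fromDiagonalBlocks,
    fin_two_diagonal_eq_unitriangular_mul (Units.mul_inv a)]
  simp only [Pi.mulSingle_mul, ← fromDiagonalBlocks_mul, Emat_self_eq_fromDiagonalBlocks,
    Fmat_self_eq_fromDiagonalBlocks]
end

section
/- For a ∈ R and indices i ≠ j, the symplectic matrix K_{ij}(a) = [[A, 0],[0, (A^T)^{-1}]], where A = I + a·e_{ij}, factors as a product of five elementary symplectic matrices: K_{ij}(a) = F_{jj}(-a) E_{ij}(1) F_{jj}(a) E_{ii}(a) E_{ij}(-1). -/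
open Matrix

/-!
Write `S = e_{ij} + e_{ji}` and `C = a e_{jj}`, so that `E_{ij}(1) = [[I, S], [0, I]]` and
`F_{jj}(±a) = [[I, 0], [±C, I]]`. Conjugating the upper unipotent block matrix by the lower one gives
`[[I + S C, S], [-C S C, I - C S]]`; here `S C = a e_{ij}`, `C S = a e_{ji}` and `C S C = 0` because
`i ≠ j`, so the first three factors give `[[A, S], [0, (Aᵀ)⁻¹]]`. The last two factors multiply to
`[[I, a e_{ii} - S], [0, I]]`, and `A (a e_{ii} - S) = -S` removes the upper right block.
-/

section BlockUnipotent

variable {m α : Type*} [Fintype m] [DecidableEq m] [Ring α]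

lemma fromBlocks_one_mul_fromBlocks_one (B B' : Matrix m m α) :
    (fromBlocks 1 B 0 1 * fromBlocks 1 B' 0 1 : Matrix (m ⊕ m) (m ⊕ m) α) =
      fromBlocks 1 (B + B') 0 1 := by
  simp [fromBlocks_multiply, add_comm]

lemma fromBlocks_upper_mul_fromBlocks_one (A B D B' : Matrix m m α) :
    fromBlocks A B 0 D * fromBlocks 1 B' 0 1 = fromBlocks A (A * B' + B) 0 D := by
  simp [fromBlocks_multiply]

lemma fromBlocks_lower_conj_upper (B C : Matrix m m α) :
    fromBlocks 1 0 (-C) 1 * fromBlocks 1 B 0 1 * fromBlocks 1 0 C 1 =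
      fromBlocks (1 + B * C) B (-(C * B * C)) (1 - C * B) := by
  simp only [fromBlocks_multiply]
  congr 1 <;> noncomm_ring

end BlockUnipotent

section Smat

variable {R : Type*} [CommRing R] {n : ℕ}

lemma Smat_of_ne {i j : Fin n} (hij : i ≠ j) (a : R) :
    Smat i j a = single i j a + single j i a := by
  ext k l
  simp only [Smat, of_apply, Matrix.add_apply, single]
  aesop

lemma Smat_self (i : Fin n) (a : R) : Smat i i a = single i i a := by
  ext k l
  simp only [Smat, of_apply, single]
  aesop

end Smat

/-- For `i ≠ j`, `K_{ij}(a)` factors as `F_{jj}(-a) E_{ij}(1) F_{jj}(a) E_{ii}(a) E_{ij}(-1)`. -/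
theorem stmt4 {R : Type*} [CommRing R] {n : ℕ} (i j : Fin n) (hij : i ≠ j) (a : R) :
    Kmat i j a =
      Fmat j j (-a) * Emat i j 1 * Fmat j j a * Emat i i a * Emat i j (-1) := by
  set S : Matrix (Fin n) (Fin n) R := single i j 1 + single j i 1
  set C : Matrix (Fin n) (Fin n) R := single j j a
  have hF_neg : Fmat j j (-a) = fromBlocks 1 0 (-C) 1 := by rw [Fmat, Smat_self, single_neg]
  have hF : Fmat j j a = fromBlocks 1 0 C 1 := by rw [Fmat, Smat_self]
  have hE : Emat i j 1 = fromBlocks 1 S 0 1 := by rw [Emat, Smat_of_ne hij]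
  have hEE : Emat i i a * Emat i j (-1) = fromBlocks 1 (single i i a - S) 0 1 := by
    rw [Emat, Emat, fromBlocks_one_mul_fromBlocks_one, Smat_self, Smat_of_ne hij, sub_eq_add_neg,
      neg_add, single_neg, single_neg]
  have hSC : S * C = single i j a := by simp [S, C, add_mul, hij]
  have hCS : C * S = single j i a := by simp [S, C, mul_add, hij.symm]
  have hCSC : C * S * C = 0 := by simp [hCS, C, hij]
  have hcancel : (1 + single i j a) * (single i i a - S) + S = 0 := by
    simp only [S, mul_sub, mul_add, add_mul, one_mul, mul_one, single_mul_single_same,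
      single_mul_single_of_ne, hij.symm, ne_eq, not_false_eq_true, add_zero]
    abel
  rw [mul_assoc _ (Emat i i a), hEE, hF_neg, hE, hF, fromBlocks_lower_conj_upper, hSC, hCSC, hCS,
    neg_zero, fromBlocks_upper_mul_fromBlocks_one, hcancel, Kmat]
end

section
/- If R is a commutative ring of Bass stable rank 1, then every symplectic 2n×2n matrix over R is a product of elementary symplectic matrices. -/
/-!
Induction on `n`. Because `R` has stable rank one, `Ep_{2n}(R)` acts transitively on unimodular
vectors: adding suitable multiples of the bottom half of a unimodular vector `(x, y)` to its top
half makes `x` itself unimodular, say `r ⬝ᵥ x = 1`, and then the symmetric matrix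
`w rᵀ + r wᵀ - (w ⬝ᵥ x) r rᵀ` sends `x` to any prescribed `w`, so three more elementary moves reach
`e₁`. A symplectic `M` has a left inverse, so its first column is unimodular and can be moved to
`e₁`. Symplecticity then puts a `1` in the `f₁`-coordinate of the second column, which is moved
to `f₁` by elementary matrices fixing `e₁`. Applying `Mᵀ J M = J` to `e₁` and `f₁` shows that the
corresponding rows are standard as well, so the matrix is `I₂ ⊕ A` with `A ∈ Sp_{2n-2}(R)`, and
`A ↦ I₂ ⊕ A` maps elementary symplectic matrices to elementary symplectic matrices.
-/

open Matrix

section ElemSymp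

variable {R : Type*} [CommRing R] {n : ℕ}

variable (R n) in
/-- The group `Ep_{2n}(R)`. -/
def elemSymp : Submonoid (Matrix (Idx n) (Idx n) R) :=
  Submonoid.closure {E | IsElemSymp E}

theorem fromBlocks_upper_mem_elemSymp {S : Matrix (Fin n) (Fin n) R} (hS : Sᵀ = S) :
    fromBlocks 1 S 0 1 ∈ elemSymp R n :=
  Submonoid.subset_closure ⟨S, hS, Or.inl rfl⟩

theorem fromBlocks_lower_mem_elemSymp {S : Matrix (Fin n) (Fin n) R} (hS : Sᵀ = S) :
    fromBlocks 1 0 S 1 ∈ elemSymp R n :=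
  Submonoid.subset_closure ⟨S, hS, Or.inr rfl⟩

theorem IsElemSymp.exists_mul_eq_one {E : Matrix (Idx n) (Idx n) R} (hE : IsElemSymp E) :
    ∃ E', IsElemSymp E' ∧ E' * E = 1 := by
  obtain ⟨S, hS, rfl | rfl⟩ := hE
  · exact ⟨fromBlocks 1 (-S) 0 1, ⟨-S, by rw [transpose_neg, hS], Or.inl rfl⟩,
      by simp [fromBlocks_multiply, fromBlocks_one]⟩
  · exact ⟨fromBlocks 1 0 (-S) 1, ⟨-S, by rw [transpose_neg, hS], Or.inr rfl⟩,
      by simp [fromBlocks_multiply, fromBlocks_one]⟩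

theorem exists_mul_eq_one_of_mem_elemSymp {G : Matrix (Idx n) (Idx n) R}
    (hG : G ∈ elemSymp R n) : ∃ G' ∈ elemSymp R n, G' * G = 1 := by
  induction hG using Submonoid.closure_induction with
  | mem E hE =>
    obtain ⟨E', hE', h⟩ := hE.exists_mul_eq_one
    exact ⟨E', Submonoid.subset_closure hE', h⟩
  | one => exact ⟨1, one_mem _, mul_one 1⟩
  | mul G H _ _ hG hH =>
    obtain ⟨G', hG', hG'G⟩ := hG
    obtain ⟨H', hH', hH'H⟩ := hH
    refine ⟨H' * G', mul_mem hH' hG', ?_⟩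
    rw [mul_assoc, ← mul_assoc G', hG'G, one_mul, hH'H]

theorem mem_elemSymp_of_mul_mem {G M : Matrix (Idx n) (Idx n) R} (hG : G ∈ elemSymp R n)
    (hGM : G * M ∈ elemSymp R n) : M ∈ elemSymp R n := by
  obtain ⟨G', hG', hG'G⟩ := exists_mul_eq_one_of_mem_elemSymp hG
  rw [← one_mul M, ← hG'G, mul_assoc]
  exact mul_mem hG' hGM

theorem upper_mulVec (S : Matrix (Fin n) (Fin n) R) (x y : Fin n → R) :
    fromBlocks 1 S 0 1 *ᵥ (x ⊕ᵥ y) = (x + S *ᵥ y) ⊕ᵥ y := by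
  simp [fromBlocks_mulVec]

theorem lower_mulVec (S : Matrix (Fin n) (Fin n) R) (x y : Fin n → R) :
    fromBlocks 1 0 S 1 *ᵥ (x ⊕ᵥ y) = x ⊕ᵥ (S *ᵥ x + y) := by
  simp [fromBlocks_mulVec]

end ElemSymp

section Symplectic

variable {R : Type*} [CommRing R] {n : ℕ}

theorem IsSymplectic.mul {A B : Matrix (Idx n) (Idx n) R} (hA : IsSymplectic A)
    (hB : IsSymplectic B) : IsSymplectic (A * B) := by
  unfold IsSymplectic at *
  rw [transpose_mul, show Bᵀ * Aᵀ * Jmat R n * (A * B) = Bᵀ * (Aᵀ * Jmat R n * A) * B by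
    noncomm_ring, hA, hB]

theorem IsElemSymp.isSymplectic {E : Matrix (Idx n) (Idx n) R} (hE : IsElemSymp E) :
    IsSymplectic E := by
  obtain ⟨S, hS, rfl | rfl⟩ := hE <;>
  · simp only [IsSymplectic, Jmat, fromBlocks_transpose, fromBlocks_multiply]
    simp [hS]

theorem isSymplectic_of_mem_elemSymp {G : Matrix (Idx n) (Idx n) R} (hG : G ∈ elemSymp R n) :
    IsSymplectic G := by
  induction hG using Submonoid.closure_induction with
  | mem E hE => exact hE.isSymplectic
  | one => simp [IsSymplectic]
  | mul _ _ _ _ hG hH => exact hG.mul hH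

theorem Jmat_mul_Jmat : Jmat R n * Jmat R n = -1 := by
  simp [Jmat, fromBlocks_multiply, ← fromBlocks_one, fromBlocks_neg]

theorem IsSymplectic.exists_mul_eq_one {M : Matrix (Idx n) (Idx n) R} (hM : IsSymplectic M) :
    ∃ L, L * M = 1 :=
  ⟨-(Jmat R n * Mᵀ * Jmat R n), by
    rw [show -(Jmat R n * Mᵀ * Jmat R n) * M = -(Jmat R n * (Mᵀ * Jmat R n * M)) by
      noncomm_ring, hM, Jmat_mul_Jmat, neg_neg]⟩

theorem IsSymplectic.transpose_mulVec_Jmat_mulVec {M : Matrix (Idx n) (Idx n) R}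
    (hM : IsSymplectic M) {v : Idx n → R} (hv : M *ᵥ v = v) :
    Mᵀ *ᵥ (Jmat R n *ᵥ v) = Jmat R n *ᵥ v := by
  conv_lhs => rw [← hv, mulVec_mulVec, mulVec_mulVec, hM]

theorem Jmat_mulVec_single_inl (i : Fin n) :
    Jmat R n *ᵥ Pi.single (.inl i) 1 = -Pi.single (.inr i) 1 := by
  ext (k | k) <;> simp [Jmat, Pi.single_apply, one_apply]

theorem Jmat_mulVec_single_inr (i : Fin n) :
    Jmat R n *ᵥ Pi.single (.inr i) 1 = Pi.single (.inl i) 1 := by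
  ext (k | k) <;> simp [Jmat, Pi.single_apply, one_apply]

theorem IsSymplectic.vecMul_single_inr {N : Matrix (Idx n) (Idx n) R} (hN : IsSymplectic N)
    {i : Fin n} (h : N *ᵥ Pi.single (.inl i) 1 = Pi.single (.inl i) 1) :
    Pi.single (.inr i) 1 ᵥ* N = Pi.single (.inr i) 1 := by
  have := hN.transpose_mulVec_Jmat_mulVec h
  rwa [Jmat_mulVec_single_inl, mulVec_neg, neg_inj, mulVec_transpose] at this

theorem IsSymplectic.vecMul_single_inl {N : Matrix (Idx n) (Idx n) R} (hN : IsSymplectic N)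
    {i : Fin n} (h : N *ᵥ Pi.single (.inr i) 1 = Pi.single (.inr i) 1) :
    Pi.single (.inl i) 1 ᵥ* N = Pi.single (.inl i) 1 := by
  have := hN.transpose_mulVec_Jmat_mulVec h
  rwa [Jmat_mulVec_single_inr, mulVec_transpose] at this

end Symplectic

section StableRank

variable {R : Type*} [CommRing R]

variable (R) in
def HasStableRankOne : Prop :=
  ∀ x₁ x₂ : R, (∃ r s : R, r * x₁ + s * x₂ = 1) → ∃ y : R, IsUnit (x₁ + y * x₂)

theorem Ideal.span_range_fin_succ {k : ℕ} (f : Fin (k + 1) → R) :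
    Ideal.span (Set.range f) = Ideal.span {f 0} ⊔ Ideal.span (Set.range (Fin.tail f)) := by
  rw [← Ideal.span_insert, ← Fin.range_cons, Fin.cons_self_tail]

theorem Ideal.span_range_eq_top_iff_exists_dotProduct {ι : Type*} [Fintype ι] (v : ι → R) :
    Ideal.span (Set.range v) = ⊤ ↔ ∃ r, r ⬝ᵥ v = 1 := by
  rw [Ideal.eq_top_iff_one, Ideal.mem_span_range_iff_exists_fun]
  rfl

theorem HasStableRankOne.exists_isUnit_add (hsr : HasStableRankOne R) {a : R} {I : Ideal R}
    (h : Ideal.span {a} ⊔ I = ⊤) : ∃ i ∈ I, IsUnit (a + i) := by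
  obtain ⟨r, i, hi, hri⟩ := Ideal.mem_span_singleton_sup.1 (h ▸ Submodule.mem_top : (1 : R) ∈ _)
  obtain ⟨y, hy⟩ := hsr a i ⟨r, 1, by rw [one_mul, hri]⟩
  exact ⟨y * i, I.mul_mem_left y hi, hy⟩

/-- The stable rank one condition, applied one coordinate at a time; the ideal `I` absorbs the
coordinates already treated. -/
theorem HasStableRankOne.exists_span_range_add_mul_sup_eq_top (hsr : HasStableRankOne R) :
    ∀ {k : ℕ} (t b : Fin k → R) (I : Ideal R),
      Ideal.span (Set.range t) ⊔ Ideal.span (Set.range b) ⊔ I = ⊤ →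
      ∃ μ : Fin k → R, Ideal.span (Set.range (t + μ * b)) ⊔ I = ⊤ := by
  intro k
  induction k with
  | zero => intro t b I h; exact ⟨0, by simpa [Set.range_eq_empty] using h⟩
  | succ k ih =>
    intro t b I h
    rw [Ideal.span_range_fin_succ t, Ideal.span_range_fin_succ b] at h
    obtain ⟨_, hi, hu⟩ := hsr.exists_isUnit_add
      (I := Ideal.span {b 0} ⊔ (Ideal.span (Set.range (Fin.tail t)) ⊔
        Ideal.span (Set.range (Fin.tail b)) ⊔ I)) (by rw [← h]; ac_rfl)
    obtain ⟨μ₀, j, hj, rfl⟩ := Ideal.mem_span_singleton_sup.1 hi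
    obtain ⟨μ, hμ⟩ := ih (Fin.tail t) (Fin.tail b) (Ideal.span {t 0 + μ₀ * b 0} ⊔ I) <| by
      refine Ideal.eq_top_of_isUnit_mem _ ?_ (by rwa [← add_assoc] at hu)
      exact add_mem (Ideal.mem_sup_right (Ideal.mem_sup_left (Ideal.mem_span_singleton_self _)))
        (SetLike.le_def.1 (sup_le_sup_left le_sup_right _) hj)
    refine ⟨Fin.cons μ₀ μ, ?_⟩
    rw [Ideal.span_range_fin_succ, ← hμ]
    change Ideal.span {t 0 + μ₀ * b 0} ⊔ Ideal.span (Set.range (Fin.tail t + μ * Fin.tail b)) ⊔ I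
      = _
    rw [sup_assoc, sup_left_comm]

theorem HasStableRankOne.exists_dotProduct_add_mul_eq_one (hsr : HasStableRankOne R) {n : ℕ}
    {x y : Fin n → R} (h : ∃ w, w ⬝ᵥ (x ⊕ᵥ y) = 1) :
    ∃ μ r : Fin n → R, r ⬝ᵥ (x + μ * y) = 1 := by
  rw [← Ideal.span_range_eq_top_iff_exists_dotProduct, Set.Sum.elim_range, Ideal.span_union] at h
  obtain ⟨μ, hμ⟩ := hsr.exists_span_range_add_mul_sup_eq_top x y ⊥ (by rwa [sup_bot_eq])
  exact ⟨μ, (Ideal.span_range_eq_top_iff_exists_dotProduct _).1 (by rwa [sup_bot_eq] at hμ)⟩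

end StableRank

section Transitivity

variable {R : Type*} [CommRing R] {n : ℕ}

theorem exists_transpose_eq_self_mulVec_eq {x r : Fin n → R} (hr : r ⬝ᵥ x = 1) (w : Fin n → R) :
    ∃ S : Matrix (Fin n) (Fin n) R, Sᵀ = S ∧ S *ᵥ x = w := by
  refine ⟨vecMulVec w r + vecMulVec r w - (w ⬝ᵥ x) • vecMulVec r r, ?_, ?_⟩
  · simp only [transpose_sub, transpose_add, transpose_smul, transpose_vecMulVec]
    abel
  · simp only [sub_mulVec, add_mulVec, smul_mulVec, vecMulVec_mulVec, hr, op_smul_eq_smul,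
      one_smul]
    abel

theorem HasStableRankOne.exists_mem_elemSymp_mulVec_eq_single (hsr : HasStableRankOne R)
    {v : Idx n → R} (hv : ∃ w, w ⬝ᵥ v = 1) (i : Fin n) :
    ∃ G ∈ elemSymp R n, G *ᵥ v = Pi.single (.inl i) 1 := by
  obtain ⟨x, y, rfl⟩ : ∃ x y, v = x ⊕ᵥ y := ⟨_, _, (Sum.elim_comp_inl_inr v).symm⟩
  obtain ⟨μ, r, hr⟩ := hsr.exists_dotProduct_add_mul_eq_one hv
  rw [← Sum.elim_single_zero]
  set e : Fin n → R := Pi.single i 1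
  have he : e ⬝ᵥ e = 1 := by simp [e]
  have hμ : diagonal μ *ᵥ y = μ * y := funext (mulVec_diagonal μ y)
  obtain ⟨S₂, hS₂, hS₂x⟩ := exists_transpose_eq_self_mulVec_eq hr (e - y)
  obtain ⟨S₃, hS₃, hS₃e⟩ := exists_transpose_eq_self_mulVec_eq he (e - (x + μ * y))
  obtain ⟨S₄, hS₄, hS₄e⟩ := exists_transpose_eq_self_mulVec_eq he (-e)
  refine ⟨fromBlocks 1 0 S₄ 1 * fromBlocks 1 S₃ 0 1 * fromBlocks 1 0 S₂ 1 *
    fromBlocks 1 (diagonal μ) 0 1, ?_, ?_⟩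
  · refine mul_mem (mul_mem (mul_mem ?_ ?_) ?_) ?_
    exacts [fromBlocks_lower_mem_elemSymp hS₄, fromBlocks_upper_mem_elemSymp hS₃,
      fromBlocks_lower_mem_elemSymp hS₂, fromBlocks_upper_mem_elemSymp (diagonal_transpose μ)]
  · simp only [← mulVec_mulVec, upper_mulVec, lower_mulVec, hμ, hS₂x, sub_add_cancel, hS₃e,
      add_sub_cancel, hS₄e, neg_add_cancel]

theorem exists_mem_elemSymp_mulVec_single_eq_and_mulVec_eq_single (i : Fin n) {w : Idx n → R}
    (hw : w (.inr i) = 1) :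
    ∃ G ∈ elemSymp R n, G *ᵥ Pi.single (.inl i) 1 = Pi.single (.inl i) 1 ∧
      G *ᵥ w = Pi.single (.inr i) 1 := by
  obtain ⟨a, b, rfl⟩ : ∃ a b, w = a ⊕ᵥ b := ⟨_, _, (Sum.elim_comp_inl_inr w).symm⟩
  rw [← Sum.elim_single_zero, ← Sum.elim_zero_single]
  set e : Fin n → R := Pi.single i 1
  have he : e ⬝ᵥ e = 1 := by simp [e]
  have heb : e ⬝ᵥ b = 1 := by simpa [e] using hw
  obtain ⟨S₁, hS₁, hS₁b⟩ := exists_transpose_eq_self_mulVec_eq heb (-a)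
  obtain ⟨S₂, hS₂, hS₂e⟩ := exists_transpose_eq_self_mulVec_eq he (b - e)
  obtain ⟨S₄, hS₄, hS₄e⟩ := exists_transpose_eq_self_mulVec_eq he (e - b)
  obtain ⟨S₅, hS₅, hS₅e⟩ := exists_transpose_eq_self_mulVec_eq he (-e)
  have hS₃ : vecMulVec e e *ᵥ (b - e) = 0 := by
    simp [vecMulVec_mulVec, dotProduct_sub, heb, he]
  have hS₃' : vecMulVec e e *ᵥ b = e := by
    simp [vecMulVec_mulVec, heb]
  refine ⟨fromBlocks 1 S₅ 0 1 * fromBlocks 1 0 S₄ 1 * fromBlocks 1 (vecMulVec e e) 0 1 *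
    fromBlocks 1 0 S₂ 1 * fromBlocks 1 S₁ 0 1, ?_, ?_, ?_⟩
  · refine mul_mem (mul_mem (mul_mem (mul_mem ?_ ?_) ?_) ?_) ?_
    exacts [fromBlocks_upper_mem_elemSymp hS₅, fromBlocks_lower_mem_elemSymp hS₄,
      fromBlocks_upper_mem_elemSymp (transpose_vecMulVec e e), fromBlocks_lower_mem_elemSymp hS₂,
      fromBlocks_upper_mem_elemSymp hS₁]
  · simp only [← mulVec_mulVec, upper_mulVec, lower_mulVec, mulVec_zero, add_zero, hS₂e, hS₃,
      hS₄e, sub_add_sub_cancel, sub_self]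
  · simp only [← mulVec_mulVec, upper_mulVec, lower_mulVec, mulVec_zero, zero_add, hS₁b,
      add_neg_cancel, hS₃', hS₄e, sub_add_cancel, hS₅e]

theorem exists_dotProduct_mulVec_single_eq_one_of_mul_eq_one {ι : Type*} [Fintype ι]
    [DecidableEq ι] {L M : Matrix ι ι R} (h : L * M = 1) (c : ι) :
    ∃ w, w ⬝ᵥ (M *ᵥ Pi.single c 1) = 1 :=
  ⟨L c, show (L *ᵥ (M *ᵥ Pi.single c 1)) c = 1 by
    rw [mulVec_mulVec, h, one_mulVec, Pi.single_eq_same]⟩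

end Transitivity

section Extend

variable {R : Type*} [CommRing R] {m : ℕ}

/-- The block diagonal matrix `[[d, 0], [0, B]]`, with `d` at index `0`. -/
def liftFin (d : R) (B : Matrix (Fin m) (Fin m) R) : Matrix (Fin (m + 1)) (Fin (m + 1)) R :=
  of (Fin.cons (Fin.cons d 0) fun i => Fin.cons 0 (B i))

@[simp] theorem liftFin_zero_zero (d : R) (B : Matrix (Fin m) (Fin m) R) : liftFin d B 0 0 = d :=
  rfl

@[simp] theorem liftFin_zero_succ (d : R) (B : Matrix (Fin m) (Fin m) R) (j : Fin m) :
    liftFin d B 0 j.succ = 0 :=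
  rfl

@[simp] theorem liftFin_succ_zero (d : R) (B : Matrix (Fin m) (Fin m) R) (i : Fin m) :
    liftFin d B i.succ 0 = 0 :=
  rfl

@[simp] theorem liftFin_succ_succ (d : R) (B : Matrix (Fin m) (Fin m) R) (i j : Fin m) :
    liftFin d B i.succ j.succ = B i j :=
  rfl

theorem liftFin_transpose (d : R) (B : Matrix (Fin m) (Fin m) R) :
    (liftFin d B)ᵀ = liftFin d Bᵀ := by
  ext i j
  cases i using Fin.cases <;> cases j using Fin.cases <;> rfl

theorem liftFin_one : liftFin (1 : R) (1 : Matrix (Fin m) (Fin m) R) = 1 := by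
  ext i j
  cases i using Fin.cases <;> cases j using Fin.cases <;>
    simp [one_apply, (Fin.succ_ne_zero _).symm]

theorem liftFin_zero : liftFin (0 : R) (0 : Matrix (Fin m) (Fin m) R) = 0 := by
  ext i j
  cases i using Fin.cases <;> cases j using Fin.cases <;> rfl

/-- `extend P A` carries the `2 × 2` matrix `P` on the coordinates `inl 0, inr 0` and `A` on the
remaining ones, `inl (succ i), inr (succ i)`. -/
def extend (P : Matrix (Idx 1) (Idx 1) R) (A : Matrix (Idx m) (Idx m) R) :
    Matrix (Idx (m + 1)) (Idx (m + 1)) R :=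
  fromBlocks
    (liftFin (P (.inl 0) (.inl 0)) A.toBlocks₁₁) (liftFin (P (.inl 0) (.inr 0)) A.toBlocks₁₂)
    (liftFin (P (.inr 0) (.inl 0)) A.toBlocks₂₁) (liftFin (P (.inr 0) (.inr 0)) A.toBlocks₂₂)

theorem extend_one_fromBlocks (a b c d : Matrix (Fin m) (Fin m) R) :
    extend 1 (fromBlocks a b c d) =
      fromBlocks (liftFin 1 a) (liftFin 0 b) (liftFin 0 c) (liftFin 1 d) := by
  simp [extend]

theorem extend_mul (P Q : Matrix (Idx 1) (Idx 1) R) (A B : Matrix (Idx m) (Idx m) R) :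
    extend P A * extend Q B = extend (P * Q) (A * B) := by
  ext (i | i) (j | j) <;> cases i using Fin.cases <;> cases j using Fin.cases <;>
    simp [extend, mul_apply, Fintype.sum_sum_type, Fin.sum_univ_succ, toBlocks₁₁, toBlocks₁₂,
      toBlocks₂₁, toBlocks₂₂]

theorem extend_transpose (P : Matrix (Idx 1) (Idx 1) R) (A : Matrix (Idx m) (Idx m) R) :
    (extend P A)ᵀ = extend Pᵀ Aᵀ := by
  ext (i | i) (j | j) <;> cases i using Fin.cases <;> cases j using Fin.cases <;>
    simp [extend, toBlocks₁₁, toBlocks₁₂, toBlocks₂₁, toBlocks₂₂]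

theorem extend_one : extend (1 : Matrix (Idx 1) (Idx 1) R) (1 : Matrix (Idx m) (Idx m) R) = 1 := by
  rw [← fromBlocks_one (m := Fin m), extend_one_fromBlocks, liftFin_one, liftFin_zero,
    fromBlocks_one]

theorem extend_Jmat : extend (Jmat R 1) (Jmat R m) = Jmat R (m + 1) := by
  ext (i | i) (j | j) <;> cases i using Fin.cases <;> cases j using Fin.cases <;>
    simp [extend, Jmat, toBlocks₁₁, toBlocks₁₂, toBlocks₂₁, toBlocks₂₂, one_apply,
      (Fin.succ_ne_zero _).symm]

theorem extend_injective (P : Matrix (Idx 1) (Idx 1) R) :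
    Function.Injective (extend (m := m) P) := by
  intro A B h
  ext (i | i) (j | j)
  exacts [congrFun₂ h (.inl i.succ) (.inl j.succ), congrFun₂ h (.inl i.succ) (.inr j.succ),
    congrFun₂ h (.inr i.succ) (.inl j.succ), congrFun₂ h (.inr i.succ) (.inr j.succ)]

theorem IsSymplectic.of_extend_one {A : Matrix (Idx m) (Idx m) R}
    (hA : IsSymplectic (extend 1 A)) : IsSymplectic A := by
  unfold IsSymplectic at hA ⊢
  rw [← extend_Jmat, extend_transpose, extend_mul, extend_mul, transpose_one, one_mul,
    mul_one] at hA
  exact extend_injective _ hA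

theorem extend_one_mem_elemSymp {A : Matrix (Idx m) (Idx m) R}
    (hA : A ∈ elemSymp R m) : extend 1 A ∈ elemSymp R (m + 1) := by
  induction hA using Submonoid.closure_induction with
  | mem E hE =>
    obtain ⟨S, hS, rfl | rfl⟩ := hE
    · rw [extend_one_fromBlocks, liftFin_one, liftFin_zero]
      exact fromBlocks_upper_mem_elemSymp (by rw [liftFin_transpose, hS])
    · rw [extend_one_fromBlocks, liftFin_one, liftFin_zero]
      exact fromBlocks_lower_mem_elemSymp (by rw [liftFin_transpose, hS])
  | one => rw [extend_one]; exact one_mem _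
  | mul A B _ _ hA hB => simpa [extend_mul] using mul_mem hA hB

theorem IsSymplectic.exists_eq_extend_one {N : Matrix (Idx (m + 1)) (Idx (m + 1)) R}
    (hN : IsSymplectic N) (he : N *ᵥ Pi.single (.inl 0) 1 = Pi.single (.inl 0) 1)
    (hf : N *ᵥ Pi.single (.inr 0) 1 = Pi.single (.inr 0) 1) :
    ∃ A, IsSymplectic A ∧ N = extend 1 A := by
  have hre := congrFun (hN.vecMul_single_inl hf)
  have hrf := congrFun (hN.vecMul_single_inr he)
  have hce := congrFun he
  have hcf := congrFun hf
  simp only [single_one_vecMul, mulVec_single_one, row_apply, col_apply] at hre hrf hce hcf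
  have hNA :
      N = extend 1 (N.submatrix (Sum.map Fin.succ Fin.succ) (Sum.map Fin.succ Fin.succ)) := by
    ext (i | i) (j | j) <;> cases i using Fin.cases <;> cases j using Fin.cases <;>
      simp [extend, toBlocks₁₁, toBlocks₁₂, toBlocks₂₁, toBlocks₂₂, hre, hrf, hce, hcf]
  exact ⟨_, IsSymplectic.of_extend_one (hNA ▸ hN), hNA⟩

end Extend

theorem HasStableRankOne.mem_elemSymp_of_isSymplectic {R : Type*} [CommRing R]
    (hsr : HasStableRankOne R) :
    ∀ {n : ℕ} {M : Matrix (Idx n) (Idx n) R}, IsSymplectic M → M ∈ elemSymp R n := by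
  intro n
  induction n with
  | zero => intro M _; rw [Subsingleton.elim M 1]; exact one_mem _
  | succ m ih =>
    intro M hM
    obtain ⟨L, hL⟩ := hM.exists_mul_eq_one
    obtain ⟨G₁, hG₁, hG₁M⟩ := hsr.exists_mem_elemSymp_mulVec_eq_single
      (exists_dotProduct_mulVec_single_eq_one_of_mul_eq_one hL (.inl 0)) 0
    rw [mulVec_mulVec] at hG₁M
    have hN₁ := (isSymplectic_of_mem_elemSymp hG₁).mul hM
    have hw : ((G₁ * M) *ᵥ Pi.single (.inr 0) 1) (.inr 0) = 1 := by
      simpa using congrFun (hN₁.vecMul_single_inr hG₁M) (.inr 0)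
    obtain ⟨G₂, hG₂, hG₂e, hG₂f⟩ :=
      exists_mem_elemSymp_mulVec_single_eq_and_mulVec_eq_single 0 hw
    obtain ⟨A, hA, hNA⟩ := ((isSymplectic_of_mem_elemSymp hG₂).mul hN₁).exists_eq_extend_one
      (by rw [← mulVec_mulVec, hG₁M, hG₂e]) (by rw [← mulVec_mulVec, hG₂f])
    refine mem_elemSymp_of_mul_mem (mul_mem hG₂ hG₁) ?_
    rw [mul_assoc, hNA]
    exact extend_one_mem_elemSymp (ih hA)

/-- If `R` has Bass stable rank one, every symplectic matrix is a product of elementary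
symplectic matrices. -/
theorem stmt8 {R : Type*} [CommRing R] {n : ℕ}
    (hbsr : ∀ x₁ x₂ : R, (∃ r s : R, r * x₁ + s * x₂ = 1) → ∃ y : R, IsUnit (x₁ + y * x₂))
    (M : Matrix (Idx n) (Idx n) R) (hM : IsSymplectic M) :
    ∃ L : List (Matrix (Idx n) (Idx n) R),
      (∀ E ∈ L, IsElemSymp E) ∧ M = L.prod := by
  obtain ⟨L, hL, hprod⟩ := Submonoid.exists_list_of_mem_closure
    (HasStableRankOne.mem_elemSymp_of_isSymplectic hbsr hM)
  exact ⟨L, hL, hprod.symm⟩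
end

section
/- There is an open neighbourhood V of the identity in Sp_{2n}(ℂ) and an integer N and continuous maps E₁,...,E_N from V to the set of elementary symplectic matrices such that E_i(I) = I and M = E₁(M)···E_N(M) for all M ∈ V. -/
open Matrix

/-!
Near the identity the block `D` of a symplectic `M = [[A, B], [C, D]]` is invertible, and
`M = U(B D⁻¹) L(C Dᵀ) diag(D⁻ᵀ, D)` with symmetric blocks `B D⁻¹` and `C Dᵀ`, where
`U(X) = [[1, X], [0, 1]]` and `L(Y) = [[1, 0], [Y, 1]]`. Row elimination writes `D⁻ᵀ` as a product
of matrices `1 + W` with `W` supported on a single row `k`, and such a `W` equals `b c` with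
`b = √‖W‖ e_kk` and `c = (W + Wᵀ - W_kk e_kk) / √‖W‖` symmetric and tending to `0` with `W`.
Finally `diag(1 + b c, (1 + b c)⁻ᵀ) = U(b) L(c) U(-(1 + b c)⁻¹ b) L(-(c + c b c))`, so every factor
is an elementary symplectic matrix depending continuously on `M` and equal to `1` at `M = 1`.
-/

open Topology

section Blocks

variable {l m R : Type*}

@[simp]
lemma toBlocks₁₂_one [DecidableEq l] [DecidableEq m] [Zero R] [One R] :
    (1 : Matrix (l ⊕ m) (l ⊕ m) R).toBlocks₁₂ = 0 := by
  rw [← diagonal_one, toBlocks₁₂_diagonal]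

@[simp]
lemma toBlocks₂₁_one [DecidableEq l] [DecidableEq m] [Zero R] [One R] :
    (1 : Matrix (l ⊕ m) (l ⊕ m) R).toBlocks₂₁ = 0 := by
  rw [← diagonal_one, toBlocks₂₁_diagonal]

@[simp]
lemma toBlocks₂₂_one [DecidableEq l] [DecidableEq m] [Zero R] [One R] :
    (1 : Matrix (l ⊕ m) (l ⊕ m) R).toBlocks₂₂ = 1 := by
  rw [← diagonal_one, toBlocks₂₂_diagonal, diagonal_one]

variable [TopologicalSpace R]

lemma continuous_toBlocks₁₂ : Continuous fun M : Matrix (l ⊕ m) (l ⊕ m) R => M.toBlocks₁₂ :=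
  continuous_matrix fun _ _ => continuous_id.matrix_elem _ _

lemma continuous_toBlocks₂₁ : Continuous fun M : Matrix (l ⊕ m) (l ⊕ m) R => M.toBlocks₂₁ :=
  continuous_matrix fun _ _ => continuous_id.matrix_elem _ _

lemma continuous_toBlocks₂₂ : Continuous fun M : Matrix (l ⊕ m) (l ⊕ m) R => M.toBlocks₂₂ :=
  continuous_matrix fun _ _ => continuous_id.matrix_elem _ _

end Blocks

section Shears

variable {R : Type*} [CommRing R] {n : ℕ}

def upperShear (B : Matrix (Fin n) (Fin n) R) : Matrix (Idx n) (Idx n) R := fromBlocks 1 B 0 1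

def lowerShear (C : Matrix (Fin n) (Fin n) R) : Matrix (Idx n) (Idx n) R := fromBlocks 1 0 C 1

@[simp]
lemma upperShear_zero : upperShear (0 : Matrix (Fin n) (Fin n) R) = 1 := fromBlocks_one

@[simp]
lemma lowerShear_zero : lowerShear (0 : Matrix (Fin n) (Fin n) R) = 1 := fromBlocks_one

lemma isElemSymp_upperShear {B : Matrix (Fin n) (Fin n) R} (hB : B.IsSymm) :
    IsElemSymp (upperShear B) :=
  ⟨B, hB, Or.inl rfl⟩

lemma isElemSymp_lowerShear {C : Matrix (Fin n) (Fin n) R} (hC : C.IsSymm) :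
    IsElemSymp (lowerShear C) :=
  ⟨C, hC, Or.inr rfl⟩

/-- Multiplicative on all matrices, singular ones included, since `Matrix.mul_inv_rev` needs no
invertibility. -/
noncomputable def diagSymp : Matrix (Fin n) (Fin n) R →* Matrix (Idx n) (Idx n) R where
  toFun P := fromBlocks P 0 0 P⁻¹ᵀ
  map_one' := by simp
  map_mul' P Q := by simp [fromBlocks_multiply, Matrix.mul_inv_rev]

lemma diagSymp_apply (P : Matrix (Fin n) (Fin n) R) : diagSymp P = fromBlocks P 0 0 P⁻¹ᵀ :=
  rfl

lemma isSymm_inv_one_add_mul_mul {b c : Matrix (Fin n) (Fin n) R} (hb : b.IsSymm)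
    (hc : c.IsSymm) (hu : IsUnit (1 + b * c).det) : ((1 + b * c)⁻¹ * b).IsSymm := by
  set T := 1 + b * c
  have hT : Tᵀ = 1 + c * b := by simp [T, hb.eq, hc.eq]
  have hTu : IsUnit Tᵀ.det := by rwa [det_transpose]
  have hcomm : T * b = b * Tᵀ := by rw [hT]; simp only [T]; noncomm_ring
  have : T⁻¹ * b = b * Tᵀ⁻¹ := by
    rw [← mul_nonsing_inv_cancel_right Tᵀ (T⁻¹ * b) hTu, Matrix.mul_assoc T⁻¹, ← hcomm,
      ← Matrix.mul_assoc, nonsing_inv_mul T hu, Matrix.one_mul]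
  rw [IsSymm, transpose_mul, hb.eq, transpose_nonsing_inv, this]

lemma isSymm_add_mul_mul {b c : Matrix (Fin n) (Fin n) R} (hb : b.IsSymm) (hc : c.IsSymm) :
    (c + c * b * c).IsSymm := by
  simp [IsSymm, hb.eq, hc.eq, Matrix.mul_assoc]

lemma diagSymp_one_add_mul {b c : Matrix (Fin n) (Fin n) R} (hb : b.IsSymm) (hc : c.IsSymm)
    (hu : IsUnit (1 + b * c).det) :
    diagSymp (1 + b * c) = upperShear b * lowerShear c * upperShear (-((1 + b * c)⁻¹ * b)) *
      lowerShear (-(c + c * b * c)) := by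
  have hT : (1 + b * c)ᵀ = 1 + c * b := by simp [hb.eq, hc.eq]
  have hTS : (1 + b * c) * (1 + b * c)⁻¹ = 1 := mul_nonsing_inv _ hu
  have hST : (1 + b * c)⁻¹ * (1 + b * c) = 1 := nonsing_inv_mul _ hu
  rw [diagSymp_apply]
  generalize (1 + b * c)⁻¹ = S at hTS hST ⊢
  have hinvT : Sᵀ = 1 - c * S * b := by
    have hSTT : Sᵀ * (1 + c * b) = 1 := by rw [← hT, ← transpose_mul, hTS, transpose_one]
    rw [← inv_eq_left_inv hSTT]
    refine inv_eq_right_inv ?_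
    linear_combination (norm := noncomm_ring) -(c * hTS * b)
  rw [hinvT]
  simp only [upperShear, lowerShear, fromBlocks_multiply]
  congr 1
  · linear_combination (norm := noncomm_ring) -(hTS * b * (c + c * b * c))
  · linear_combination (norm := noncomm_ring) hTS * b
  · linear_combination (norm := noncomm_ring) -(c * hST * b * c)
  · noncomm_ring

end Shears

section Symplectic

variable {R : Type*} [CommRing R] {n : ℕ}

lemma isSymplectic_iff_mem_symplecticGroup {M : Matrix (Idx n) (Idx n) R} :
    IsSymplectic M ↔ M ∈ symplecticGroup (Fin n) R := by
  have hJ : Jmat R n = -J (Fin n) R := by simp [Jmat, J, fromBlocks_neg]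
  rw [SymplecticGroup.mem_iff', IsSymplectic, hJ, Matrix.mul_neg, Matrix.neg_mul, neg_inj]

lemma IsSymplectic.fromBlocks_toBlocks {M : Matrix (Idx n) (Idx n) R} (h : IsSymplectic M) :
    IsSymplectic (fromBlocks M.toBlocks₁₁ M.toBlocks₁₂ M.toBlocks₂₁ M.toBlocks₂₂) := by
  rwa [Matrix.fromBlocks_toBlocks]

variable {A B C D : Matrix (Fin n) (Fin n) R}

lemma isSymplectic_fromBlocks_iff :
    IsSymplectic (fromBlocks A B C D) ↔
      Aᵀ * C = Cᵀ * A ∧ Bᵀ * D = Dᵀ * B ∧ Aᵀ * D - Cᵀ * B = 1 := by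
  rw [isSymplectic_iff_mem_symplecticGroup, SymplecticGroup.fromBlocks_mem_iff]

lemma isSymplectic_fromBlocks_iff' :
    IsSymplectic (fromBlocks A B C D) ↔
      A * Bᵀ = B * Aᵀ ∧ C * Dᵀ = D * Cᵀ ∧ A * Dᵀ - B * Cᵀ = 1 := by
  rw [isSymplectic_iff_mem_symplecticGroup, ← SymplecticGroup.transpose_mem_iff,
    fromBlocks_transpose, SymplecticGroup.fromBlocks_mem_iff]
  simp only [transpose_transpose]

lemma IsSymplectic.isSymm_mul_inv (h : IsSymplectic (fromBlocks A B C D))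
    (hD : IsUnit D.det) : (B * D⁻¹).IsSymm := by
  have hBD := (isSymplectic_fromBlocks_iff.mp h).2.1
  have hDD : D * D⁻¹ = 1 := mul_nonsing_inv D hD
  have hDDt : D⁻¹ᵀ * Dᵀ = 1 := by rw [← transpose_mul, hDD, transpose_one]
  rw [IsSymm, transpose_mul]
  linear_combination (norm := noncomm_ring)
    -(D⁻¹ᵀ * Bᵀ * hDD) + D⁻¹ᵀ * hBD * D⁻¹ + hDDt * B * D⁻¹

lemma IsSymplectic.isSymm_mul_transpose (h : IsSymplectic (fromBlocks A B C D)) :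
    (C * Dᵀ).IsSymm := by
  rw [IsSymm, transpose_mul, transpose_transpose, (isSymplectic_fromBlocks_iff'.mp h).2.1]

lemma IsSymplectic.fromBlocks_eq_upperShear_mul_lowerShear_mul_diagSymp
    (h : IsSymplectic (fromBlocks A B C D)) (hD : IsUnit D.det) :
    fromBlocks A B C D =
      upperShear (B * D⁻¹) * lowerShear (C * Dᵀ) * diagSymp Dᵀ⁻¹ := by
  obtain ⟨-, hCD, hAD⟩ := isSymplectic_fromBlocks_iff'.mp h
  have hDt : IsUnit Dᵀ.det := by rwa [det_transpose]
  have h1 : D⁻¹ * D = 1 := nonsing_inv_mul D hD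
  have h2 : Dᵀ * Dᵀ⁻¹ = 1 := mul_nonsing_inv _ hDt
  rw [diagSymp_apply, nonsing_inv_nonsing_inv _ hDt, transpose_transpose]
  simp only [upperShear, lowerShear, fromBlocks_multiply]
  congr 1
  · linear_combination (norm := noncomm_ring)
      -(A * h2) + hAD * Dᵀ⁻¹ - B * h1 * Cᵀ * Dᵀ⁻¹ - B * D⁻¹ * hCD * Dᵀ⁻¹
  · linear_combination (norm := noncomm_ring) -(B * h1)
  · linear_combination (norm := noncomm_ring) -(C * h2)
  · noncomm_ring

end Symplectic

lemma List.prod_ofFn_mul_eq_of_mul_eq {M : Type*} [Monoid M] {h g : ℕ → M}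
    (hg : ∀ j, h j * g (j + 1) = g j) :
    ∀ m : ℕ, (List.ofFn fun j : Fin m => h j).prod * g m = g 0
  | 0 => by simp
  | m + 1 => by
    have ih := List.prod_ofFn_mul_eq_of_mul_eq (h := fun j => h (j + 1)) (g := fun j => g (j + 1))
      (fun j => hg (j + 1)) m
    simp only [List.ofFn_succ, List.prod_cons, Fin.val_zero, Fin.val_succ, mul_assoc] at ih ⊢
    rw [ih, hg]

section RowElimination

variable {R : Type*} [CommRing R] {n : ℕ} (P : Matrix (Fin n) (Fin n) R)

def idTopRows (j : ℕ) : Matrix (Fin n) (Fin n) R :=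
  of fun r c => if (r : ℕ) < j then (1 : Matrix (Fin n) (Fin n) R) r c else P r c

noncomputable def rowFactor (j : ℕ) : Matrix (Fin n) (Fin n) R :=
  idTopRows P j * (idTopRows P (j + 1))⁻¹

@[simp]
lemma idTopRows_zero : idTopRows P 0 = P := by
  ext r c; simp [idTopRows]

lemma idTopRows_of_le {j : ℕ} (h : n ≤ j) : idTopRows P j = 1 := by
  ext r c; simp [idTopRows, r.isLt.trans_le h]

@[simp]
lemma idTopRows_one (j : ℕ) : idTopRows (1 : Matrix (Fin n) (Fin n) R) j = 1 := by
  ext r c; simp [idTopRows]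

@[simp]
lemma rowFactor_one (j : ℕ) : rowFactor (1 : Matrix (Fin n) (Fin n) R) j = 1 := by
  simp [rowFactor]

lemma continuous_idTopRows [TopologicalSpace R] (j : ℕ) :
    Continuous fun P : Matrix (Fin n) (Fin n) R => idTopRows P j :=
  continuous_matrix fun r c => by
    by_cases h : (r : ℕ) < j
    · simpa [idTopRows, h] using continuous_const
    · simpa [idTopRows, h] using continuous_id.matrix_elem r c

variable {P}

lemma rowFactor_mul_idTopRows {j : ℕ} (hu : IsUnit (idTopRows P (j + 1)).det) :
    rowFactor P j * idTopRows P (j + 1) = idTopRows P j :=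
  nonsing_inv_mul_cancel_right _ _ hu

lemma rowFactor_apply_of_ne {j : ℕ} (hu : IsUnit (idTopRows P (j + 1)).det) {a : Fin n}
    (ha : (a : ℕ) ≠ j) (b : Fin n) : rowFactor P j a b = (1 : Matrix (Fin n) (Fin n) R) a b := by
  have hrow : idTopRows P j a = idTopRows P (j + 1) a := by
    have ha' : (a : ℕ) < j ↔ (a : ℕ) < j + 1 := by omega
    ext c
    simp only [idTopRows, of_apply, ha']
  rw [← mul_nonsing_inv _ hu, rowFactor, mul_apply, mul_apply, hrow]

lemma isUnit_det_rowFactor {j : ℕ} (h₀ : IsUnit (idTopRows P j).det)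
    (h₁ : IsUnit (idTopRows P (j + 1)).det) : IsUnit (rowFactor P j).det := by
  rw [rowFactor, det_mul]
  exact h₀.mul (isUnit_nonsing_inv_det _ h₁)

lemma prod_rowFactor (hu : ∀ j, IsUnit (idTopRows P j).det) :
    (List.ofFn fun j : Fin n => rowFactor P j).prod = P := by
  simpa [idTopRows_of_le P le_rfl] using
    List.prod_ofFn_mul_eq_of_mul_eq (fun j => rowFactor_mul_idTopRows (hu (j + 1))) n

end RowElimination

section RowSplit

attribute [local instance] Matrix.normedAddCommGroup Matrix.normedSpace

variable {𝕜 : Type*} [RCLike 𝕜] {n : ℕ}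

noncomputable def rowSplitLeft (k : Fin n) (W : Matrix (Fin n) (Fin n) 𝕜) :
    Matrix (Fin n) (Fin n) 𝕜 :=
  ((√‖W‖ : ℝ) : 𝕜) • single k k 1

noncomputable def rowSplitRight (k : Fin n) (W : Matrix (Fin n) (Fin n) 𝕜) :
    Matrix (Fin n) (Fin n) 𝕜 :=
  (((√‖W‖)⁻¹ : ℝ) : 𝕜) • (W + Wᵀ - single k k (W k k))

@[simp]
lemma rowSplitLeft_zero (k : Fin n) : rowSplitLeft k (0 : Matrix (Fin n) (Fin n) 𝕜) = 0 := by
  simp [rowSplitLeft]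

@[simp]
lemma rowSplitRight_zero (k : Fin n) : rowSplitRight k (0 : Matrix (Fin n) (Fin n) 𝕜) = 0 := by
  simp [rowSplitRight]

lemma isSymm_rowSplitLeft (k : Fin n) (W : Matrix (Fin n) (Fin n) 𝕜) :
    (rowSplitLeft k W).IsSymm :=
  IsSymm.smul (transpose_single k k 1) _

lemma isSymm_rowSplitRight (k : Fin n) (W : Matrix (Fin n) (Fin n) 𝕜) :
    (rowSplitRight k W).IsSymm := by
  refine IsSymm.smul ?_ _
  simp [IsSymm, add_comm]

lemma rowSplitLeft_mul_rowSplitRight {k : Fin n} {W : Matrix (Fin n) (Fin n) 𝕜}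
    (hW : ∀ a, a ≠ k → ∀ b, W a b = 0) : rowSplitLeft k W * rowSplitRight k W = W := by
  rcases eq_or_ne W 0 with rfl | hW0
  · simp
  have hs : √‖W‖ ≠ 0 := by positivity
  rw [rowSplitLeft, rowSplitRight, smul_mul_smul_comm, ← RCLike.ofReal_mul,
    mul_inv_cancel₀ hs, RCLike.ofReal_one, one_smul]
  ext a b
  rcases eq_or_ne a k with rfl | ha
  · rcases eq_or_ne b a with rfl | hb
    · simp
    · simp [hW b hb, single_apply_of_ne, hb.symm]
  · rw [single_mul_apply_of_ne _ _ _ _ _ ha, hW a ha]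

lemma norm_rowSplitRight_le (k : Fin n) (W : Matrix (Fin n) (Fin n) 𝕜) :
    ‖rowSplitRight k W‖ ≤ 3 * √‖W‖ := by
  have hsingle : ‖(single k k (W k k) : Matrix (Fin n) (Fin n) 𝕜)‖ ≤ ‖W‖ := by
    refine (norm_le_iff (norm_nonneg W)).mpr fun a b => ?_
    by_cases h : k = a ∧ k = b
    · obtain ⟨rfl, rfl⟩ := h
      simpa using norm_entry_le_entrywise_sup_norm W
    · simp [single, of_apply, h]
  have hsum : ‖W + Wᵀ - single k k (W k k)‖ ≤ 3 * ‖W‖ := by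
    calc ‖W + Wᵀ - single k k (W k k)‖ ≤ ‖W‖ + ‖Wᵀ‖ + ‖(single k k (W k k) : Matrix _ _ 𝕜)‖ :=
          (norm_sub_le _ _).trans (by gcongr; exact norm_add_le _ _)
      _ ≤ 3 * ‖W‖ := by rw [norm_transpose]; linarith
  rw [rowSplitRight, norm_smul, RCLike.norm_ofReal, abs_of_nonneg (by positivity)]
  calc (√‖W‖)⁻¹ * ‖W + Wᵀ - single k k (W k k)‖ ≤ (√‖W‖)⁻¹ * (3 * ‖W‖) := by gcongr
    _ = 3 * (‖W‖ / √‖W‖) := by ring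
    _ = 3 * √‖W‖ := by rw [Real.div_sqrt]

lemma continuous_rowSplitLeft (k : Fin n) :
    Continuous (rowSplitLeft k : Matrix (Fin n) (Fin n) 𝕜 → _) := by
  unfold rowSplitLeft; fun_prop

lemma continuous_rowSplitRight (k : Fin n) :
    Continuous (rowSplitRight k : Matrix (Fin n) (Fin n) 𝕜 → _) := by
  refine continuous_iff_continuousAt.mpr fun W₀ => ?_
  rcases eq_or_ne W₀ 0 with rfl | hW₀
  · have h3 : Filter.Tendsto (fun W : Matrix (Fin n) (Fin n) 𝕜 => 3 * √‖W‖) (𝓝 0) (𝓝 0) := by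
      have := (tendsto_norm_zero (E := Matrix (Fin n) (Fin n) 𝕜)).sqrt.const_mul 3
      rwa [Real.sqrt_zero, mul_zero] at this
    rw [ContinuousAt, rowSplitRight_zero]
    exact squeeze_zero_norm (norm_rowSplitRight_le k) h3
  · have hs : √‖W₀‖ ≠ 0 := by positivity
    have hsingle : Continuous fun W : Matrix (Fin n) (Fin n) 𝕜 => single k k (W k k) := by
      have : (fun W : Matrix (Fin n) (Fin n) 𝕜 => single k k (W k k)) =
          fun W => W k k • single k k 1 := by
        funext W; rw [smul_single, smul_eq_mul, mul_one]
      rw [this]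
      exact (continuous_id.matrix_elem k k).smul continuous_const
    unfold rowSplitRight
    refine ContinuousAt.smul (M := 𝕜) ?_ ?_
    · exact RCLike.continuous_ofReal.continuousAt.comp (continuous_norm.sqrt.continuousAt.inv₀ hs)
    · exact ((continuous_id.add continuous_id.matrix_transpose).sub hsingle).continuousAt

end RowSplit

section Factorization

variable {R : Type*} [CommRing R] [TopologicalSpace R] {n : ℕ}
  {V W : Set (Matrix (Idx n) (Idx n) R)}
  {T T₁ T₂ : Matrix (Idx n) (Idx n) R → Matrix (Idx n) (Idx n) R}

def HasElemFactorizationOn (V : Set (Matrix (Idx n) (Idx n) R))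
    (T : Matrix (Idx n) (Idx n) R → Matrix (Idx n) (Idx n) R) : Prop :=
  ∃ (N : ℕ) (E : Fin N → Matrix (Idx n) (Idx n) R → Matrix (Idx n) (Idx n) R),
    (∀ i, ContinuousOn (E i) V) ∧ (∀ i, E i 1 = 1) ∧
      ∀ M ∈ V, (∀ i, IsElemSymp (E i M)) ∧ T M = (List.ofFn fun i => E i M).prod

lemma HasElemFactorizationOn.congr (h : HasElemFactorizationOn V T₁) (hT : Set.EqOn T₁ T₂ V) :
    HasElemFactorizationOn V T₂ := by
  obtain ⟨N, E, hc, h1, hp⟩ := h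
  exact ⟨N, E, hc, h1, fun M hM => ⟨(hp M hM).1, (hT hM).symm.trans (hp M hM).2⟩⟩

lemma HasElemFactorizationOn.mono (h : HasElemFactorizationOn W T) (hVW : V ⊆ W) :
    HasElemFactorizationOn V T := by
  obtain ⟨N, E, hc, h1, hp⟩ := h
  exact ⟨N, E, fun i => (hc i).mono hVW, h1, fun M hM => hp M (hVW hM)⟩

lemma hasElemFactorizationOn_one : HasElemFactorizationOn V fun _ => 1 :=
  ⟨0, Fin.elim0, Fin.rec0, Fin.rec0, fun _ _ => ⟨Fin.rec0, by simp⟩⟩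

lemma hasElemFactorizationOn_of_isElemSymp (hc : ContinuousOn T V) (h1 : T 1 = 1)
    (he : ∀ M ∈ V, IsElemSymp (T M)) : HasElemFactorizationOn V T :=
  ⟨1, fun _ => T, fun _ => hc, fun _ => h1, fun M hM => ⟨fun _ => he M hM, by simp⟩⟩

lemma HasElemFactorizationOn.mul (h₁ : HasElemFactorizationOn V T₁)
    (h₂ : HasElemFactorizationOn V T₂) : HasElemFactorizationOn V fun M => T₁ M * T₂ M := by
  obtain ⟨N₁, E₁, hc₁, h1₁, hp₁⟩ := h₁
  obtain ⟨N₂, E₂, hc₂, h1₂, hp₂⟩ := h₂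
  have happend : ∀ M, (fun i => Fin.append E₁ E₂ i M) =
      Fin.append (fun i => E₁ i M) (fun i => E₂ i M) := fun M => by
    funext i; refine Fin.addCases (fun i => ?_) (fun i => ?_) i <;> simp
  refine ⟨N₁ + N₂, Fin.append E₁ E₂, Fin.addCases (by simpa using hc₁) (by simpa using hc₂),
    Fin.addCases (by simpa using h1₁) (by simpa using h1₂), fun M hM => ⟨?_, ?_⟩⟩
  · exact Fin.addCases (by simpa using (hp₁ M hM).1) (by simpa using (hp₂ M hM).1)
  · rw [happend, List.ofFn_fin_append, List.prod_append, ← (hp₁ M hM).2, ← (hp₂ M hM).2]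

lemma hasElemFactorizationOn_list_prod :
    ∀ {m : ℕ} {T : Fin m → Matrix (Idx n) (Idx n) R → Matrix (Idx n) (Idx n) R},
      (∀ j, HasElemFactorizationOn V (T j)) →
        HasElemFactorizationOn V fun M => (List.ofFn fun j => T j M).prod
  | 0, _, _ => by simpa using hasElemFactorizationOn_one
  | _ + 1, _, h => by
    simpa [List.ofFn_succ] using (h 0).mul (hasElemFactorizationOn_list_prod fun j => h j.succ)

lemma continuous_upperShear :
    Continuous (upperShear : Matrix (Fin n) (Fin n) R → Matrix (Idx n) (Idx n) R) :=
  continuous_const.matrix_fromBlocks continuous_id continuous_const continuous_const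

lemma continuous_lowerShear :
    Continuous (lowerShear : Matrix (Fin n) (Fin n) R → Matrix (Idx n) (Idx n) R) :=
  continuous_const.matrix_fromBlocks continuous_const continuous_id continuous_const

end Factorization

section NormedField

variable {𝕜 : Type*} [NormedField 𝕜] {n : ℕ}

lemma ContinuousOn.matrix_inv {X m : Type*} [TopologicalSpace X] [Fintype m] [DecidableEq m]
    {f : X → Matrix m m 𝕜} {s : Set X} (hf : ContinuousOn f s) (h : ∀ x ∈ s, (f x).det ≠ 0) :
    ContinuousOn (fun x => (f x)⁻¹) s := fun x hx =>
  (continuousAt_matrix_inv _ (by rw [Ring.inverse_eq_inv']; exact continuousAt_inv₀ (h x hx))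
    ).comp_continuousWithinAt (hf x hx)

lemma hasElemFactorizationOn_diagSymp_one_add_mul {V : Set (Matrix (Idx n) (Idx n) 𝕜)}
    {b c : Matrix (Idx n) (Idx n) 𝕜 → Matrix (Fin n) (Fin n) 𝕜}
    (hb : ContinuousOn b V) (hc : ContinuousOn c V) (hbs : ∀ M ∈ V, (b M).IsSymm)
    (hcs : ∀ M ∈ V, (c M).IsSymm) (hb1 : b 1 = 0) (hc1 : c 1 = 0)
    (hu : ∀ M ∈ V, IsUnit (1 + b M * c M).det) :
    HasElemFactorizationOn V fun M => diagSymp (1 + b M * c M) := by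
  have hinv : ContinuousOn (fun M => (1 + b M * c M)⁻¹) V :=
    (continuousOn_const.add (hb.mul hc)).matrix_inv fun M hM => (hu M hM).ne_zero
  have h₁ := hasElemFactorizationOn_of_isElemSymp (continuous_upperShear.comp_continuousOn hb)
    (by simp [hb1]) fun M hM => isElemSymp_upperShear (hbs M hM)
  have h₂ := hasElemFactorizationOn_of_isElemSymp (continuous_lowerShear.comp_continuousOn hc)
    (by simp [hc1]) fun M hM => isElemSymp_lowerShear (hcs M hM)
  have h₃ := hasElemFactorizationOn_of_isElemSymp
    (continuous_upperShear.comp_continuousOn (hinv.mul hb).neg) (by simp [hb1]) fun M hM =>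
      isElemSymp_upperShear (isSymm_inv_one_add_mul_mul (hbs M hM) (hcs M hM) (hu M hM)).neg
  have h₄ := hasElemFactorizationOn_of_isElemSymp
    (continuous_lowerShear.comp_continuousOn (hc.add ((hc.mul hb).mul hc)).neg) (by simp [hc1])
      fun M hM => isElemSymp_lowerShear (isSymm_add_mul_mul (hbs M hM) (hcs M hM)).neg
  exact (((h₁.mul h₂).mul h₃).mul h₄).congr fun M hM =>
    (diagSymp_one_add_mul (hbs M hM) (hcs M hM) (hu M hM)).symm

end NormedField

section Neighbourhood

variable {𝕜 : Type*} [NormedField 𝕜] {n : ℕ}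

def elimSet (𝕜 : Type*) [NormedField 𝕜] (n : ℕ) : Set (Matrix (Idx n) (Idx n) 𝕜) :=
  {M | M.toBlocks₂₂.det ≠ 0 ∧ ∀ j : Fin n, (idTopRows M.toBlocks₂₂ᵀ⁻¹ j).det ≠ 0}

lemma continuousOn_idTopRows (j : ℕ) :
    ContinuousOn (fun M : Matrix (Idx n) (Idx n) 𝕜 => idTopRows M.toBlocks₂₂ᵀ⁻¹ j)
      {M | M.toBlocks₂₂.det ≠ 0} :=
  (continuous_idTopRows j).comp_continuousOn <|
    continuous_toBlocks₂₂.matrix_transpose.continuousOn.matrix_inv fun M hM => by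
      rwa [det_transpose]

lemma isOpen_elimSet : IsOpen (elimSet 𝕜 n) := by
  have hD : IsOpen {M : Matrix (Idx n) (Idx n) 𝕜 | M.toBlocks₂₂.det ≠ 0} :=
    isOpen_ne.preimage continuous_toBlocks₂₂.matrix_det
  have : elimSet 𝕜 n = {M | M.toBlocks₂₂.det ≠ 0} ∩ ⋂ j : Fin n, {M | M.toBlocks₂₂.det ≠ 0} ∩
      (fun M => (idTopRows M.toBlocks₂₂ᵀ⁻¹ j).det) ⁻¹' {0}ᶜ := by
    ext M
    simp only [elimSet, Set.mem_inter_iff, Set.mem_iInter, Set.mem_ofPred_eq, Set.mem_preimage,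
      Set.mem_compl_singleton_iff]
    exact ⟨fun h => ⟨h.1, fun j => ⟨h.1, h.2 j⟩⟩, fun h => ⟨h.1, fun j => (h.2 j).2⟩⟩
  rw [this]
  refine hD.inter <| isOpen_iInter_of_finite fun j =>
    (continuous_id.matrix_det.comp_continuousOn (continuousOn_idTopRows j)).isOpen_inter_preimage
      hD isOpen_compl_singleton

lemma one_mem_elimSet : (1 : Matrix (Idx n) (Idx n) 𝕜) ∈ elimSet 𝕜 n := by
  simp [elimSet]

lemma isUnit_det_idTopRows {M : Matrix (Idx n) (Idx n) 𝕜} (hM : M ∈ elimSet 𝕜 n) (j : ℕ) :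
    IsUnit (idTopRows M.toBlocks₂₂ᵀ⁻¹ j).det := by
  rcases lt_or_ge j n with h | h
  · exact isUnit_iff_ne_zero.mpr (hM.2 ⟨j, h⟩)
  · rw [idTopRows_of_le _ h, det_one]
    exact isUnit_one

lemma continuousOn_rowFactor (j : ℕ) :
    ContinuousOn (fun M : Matrix (Idx n) (Idx n) 𝕜 => rowFactor M.toBlocks₂₂ᵀ⁻¹ j)
      (elimSet 𝕜 n) := by
  have hsub : elimSet 𝕜 n ⊆ {M | M.toBlocks₂₂.det ≠ 0} := fun _ hM => hM.1
  exact ((continuousOn_idTopRows j).mono hsub).mul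
    (((continuousOn_idTopRows (j + 1)).mono hsub).matrix_inv fun _ hM =>
      (isUnit_det_idTopRows hM _).ne_zero)

end Neighbourhood

section Main

variable {𝕜 : Type*} [RCLike 𝕜] {n : ℕ}

lemma hasElemFactorizationOn_diagSymp_rowFactor (k : Fin n) :
    HasElemFactorizationOn (elimSet 𝕜 n) fun M => diagSymp (rowFactor M.toBlocks₂₂ᵀ⁻¹ k) := by
  set W := fun M : Matrix (Idx n) (Idx n) 𝕜 => rowFactor M.toBlocks₂₂ᵀ⁻¹ k - 1
  have hW : ∀ M ∈ elimSet 𝕜 n, ∀ a, a ≠ k → ∀ b, W M a b = 0 := fun M hM a ha b => by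
    simp [W, rowFactor_apply_of_ne (isUnit_det_idTopRows hM _) (Fin.val_injective.ne ha)]
  have hsplit : ∀ M ∈ elimSet 𝕜 n,
      1 + rowSplitLeft k (W M) * rowSplitRight k (W M) = rowFactor M.toBlocks₂₂ᵀ⁻¹ k :=
    fun M hM => by rw [rowSplitLeft_mul_rowSplitRight (hW M hM), add_sub_cancel]
  have hWc : ContinuousOn W (elimSet 𝕜 n) := (continuousOn_rowFactor k).sub continuousOn_const
  refine (hasElemFactorizationOn_diagSymp_one_add_mul
    ((continuous_rowSplitLeft k).comp_continuousOn hWc)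
    ((continuous_rowSplitRight k).comp_continuousOn hWc)
    (fun M _ => isSymm_rowSplitLeft k _) (fun M _ => isSymm_rowSplitRight k _)
    (by simp [W]) (by simp [W]) fun M hM => ?_).congr fun M hM => ?_
  · simp only [Function.comp_apply, hsplit M hM]
    exact isUnit_det_rowFactor (isUnit_det_idTopRows hM _) (isUnit_det_idTopRows hM _)
  · simp only [Function.comp_apply, hsplit M hM]

lemma hasElemFactorizationOn_diagSymp :
    HasElemFactorizationOn (elimSet 𝕜 n) fun M => diagSymp M.toBlocks₂₂ᵀ⁻¹ :=
  (hasElemFactorizationOn_list_prod hasElemFactorizationOn_diagSymp_rowFactor).congr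
    fun M hM => by
      conv_rhs => rw [← prod_rowFactor (isUnit_det_idTopRows hM), map_list_prod, List.map_ofFn]
      rfl

lemma hasElemFactorizationOn_id :
    HasElemFactorizationOn (elimSet 𝕜 n ∩ {M | IsSymplectic M}) fun M => M := by
  have hD : ∀ M ∈ elimSet 𝕜 n ∩ {M | IsSymplectic M}, IsUnit M.toBlocks₂₂.det :=
    fun M hM => isUnit_iff_ne_zero.mpr hM.1.1
  have hU := hasElemFactorizationOn_of_isElemSymp
    (T := fun M : Matrix (Idx n) (Idx n) 𝕜 => upperShear (M.toBlocks₁₂ * M.toBlocks₂₂⁻¹))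
    (V := elimSet 𝕜 n ∩ {M | IsSymplectic M})
    (continuous_upperShear.comp_continuousOn <| continuous_toBlocks₁₂.continuousOn.mul <|
      continuous_toBlocks₂₂.continuousOn.matrix_inv fun M hM => hM.1.1)
    (by simp) fun M hM =>
      isElemSymp_upperShear (hM.2.fromBlocks_toBlocks.isSymm_mul_inv (hD M hM))
  have hL := hasElemFactorizationOn_of_isElemSymp
    (T := fun M : Matrix (Idx n) (Idx n) 𝕜 => lowerShear (M.toBlocks₂₁ * M.toBlocks₂₂ᵀ))
    (V := elimSet 𝕜 n ∩ {M | IsSymplectic M})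
    (continuous_lowerShear.comp_continuousOn <|
      (continuous_toBlocks₂₁.mul continuous_toBlocks₂₂.matrix_transpose).continuousOn)
    (by simp) fun M hM => isElemSymp_lowerShear hM.2.fromBlocks_toBlocks.isSymm_mul_transpose
  refine ((hU.mul hL).mul (hasElemFactorizationOn_diagSymp.mono Set.inter_subset_left)).congr
    fun M hM => ?_
  have := hM.2.fromBlocks_toBlocks.fromBlocks_eq_upperShear_mul_lowerShear_mul_diagSymp
    (hD M hM)
  rwa [Matrix.fromBlocks_toBlocks, eq_comm] at this

end Main

/-- There is a relatively open neighbourhood `V` of the identity in `Sp_{2n}(ℂ)` and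
continuous maps `E₁, …, E_N` on `V` into elementary symplectic matrices with `Eᵢ(I) = I`
and `M = E₁(M) ⋯ E_N(M)` for all `M ∈ V`. -/
theorem stmt10 (n : ℕ) :
    ∃ V : Set (Matrix (Idx n) (Idx n) ℂ),
      (1 : Matrix (Idx n) (Idx n) ℂ) ∈ V ∧
      (∃ U : Set (Matrix (Idx n) (Idx n) ℂ), IsOpen U ∧
        V = U ∩ {M : Matrix (Idx n) (Idx n) ℂ | IsSymplectic M}) ∧
      ∃ (N : ℕ) (E : Fin N → Matrix (Idx n) (Idx n) ℂ → Matrix (Idx n) (Idx n) ℂ),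
        (∀ i, ContinuousOn (E i) V) ∧
        (∀ i, E i 1 = 1) ∧
        ∀ M ∈ V, (∀ i, IsElemSymp (E i M)) ∧
          M = (List.ofFn fun i => E i M).prod :=
  ⟨elimSet ℂ n ∩ {M | IsSymplectic M}, ⟨one_mem_elimSet, by simp [IsSymplectic]⟩,
    ⟨_, isOpen_elimSet, rfl⟩, hasElemFactorizationOn_id⟩
end
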